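/- arXiv:2308.10709 — 5 statements merged into one kernel-verified Lean document; each statement's English description precedes it below -/
import Mathlib

section
/- Let S be a positive definite symmetric n×n real matrix, S₀ = [[0,0,1],[0,-S,0],[1,0,0]]. If λ = (λ₁,...,λ_{n+2}) ∈ ℝ^{n+2} satisfies λ₁ ≥ 0, λ_{n+2} ≥ 0 and S₀[λ] ≥ 0 (i.e. λ ≥ 0 in the sense of the Fourier expansion cone), and y ∈ ℝ^{n+2} is a nonzero isotropic vector with yᵀS₀λ = 0, then S₀[λ] = 0. -/
open Matrix

abbrev Idx (n : ℕ) := Fin 1 ⊕ Fin n ⊕ Fin 1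

/-- The matrix `S₀ = [[0,0,1],[0,-S,0],[1,0,0]]`. -/
def S0Mat (n : ℕ) (S : Matrix (Fin n) (Fin n) ℝ) : Matrix (Idx n) (Idx n) ℝ :=
  fun i j =>
    match i, j with
    | Sum.inl _, Sum.inr (Sum.inr _) => 1
    | Sum.inr (Sum.inr _), Sum.inl _ => 1
    | Sum.inr (Sum.inl a), Sum.inr (Sum.inl b) => -S a b
    | _, _ => 0

/-!
If `S₀[λ] > 0` then `λ` is timelike for the Lorentzian form `S₀`, so its orthogonal complement is
negative definite and cannot contain a nonzero isotropic vector. Concretely, write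
`λ = (a, v, b)` and `y = (c, w, d)`. Orthogonality reads `c b + d a = wᵀ S v` and isotropy
`S[w] = 2 c d`, so AM-GM and Cauchy-Schwarz for `S` give `2ab · S[w] ≤ (wᵀ S v)² ≤ S[v] · S[w]`.
As `S[v] < 2ab`, this forces `S[w] = 0`, hence `w = 0`, and then `c = d = 0` because `ab > 0`.
-/

theorem Matrix.PosSemidef.dotProduct_mulVec_sq_le {ι : Type*} [Fintype ι]
    {S : Matrix ι ι ℝ} (hS : S.PosSemidef) (v w : ι → ℝ) :
    (v ⬝ᵥ S *ᵥ w) ^ 2 ≤ (v ⬝ᵥ S *ᵥ v) * (w ⬝ᵥ S *ᵥ w) := by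
  classical
  have hcomm : w ⬝ᵥ S *ᵥ v = v ⬝ᵥ S *ᵥ w := by
    rw [dotProduct_comm, dotProduct_mulVec, ← mulVec_transpose,
      ← conjTranspose_eq_transpose_of_trivial, hS.isHermitian.eq]
  have := LinearMap.BilinForm.apply_mul_apply_le_of_forall_zero_le (toLinearMap₂' ℝ S)
    (fun x ↦ by
      simpa only [toLinearMap₂'_apply', star_trivial] using hS.dotProduct_mulVec_nonneg x) v w
  simpa only [toLinearMap₂'_apply', hcomm, ← sq] using this

theorem dotProduct_S0Mat_mulVec (n : ℕ) (S : Matrix (Fin n) (Fin n) ℝ) (x z : Idx n → ℝ) :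
    x ⬝ᵥ S0Mat n S *ᵥ z =
      x (.inl 0) * z (.inr (.inr 0)) + x (.inr (.inr 0)) * z (.inl 0)
        - (x ∘ .inr ∘ .inl) ⬝ᵥ S *ᵥ (z ∘ .inr ∘ .inl) := by
  simp only [dotProduct, mulVec, S0Mat, Fintype.sum_sum_type, Finset.univ_unique,
    Fin.default_eq_zero, Fin.isValue, Finset.sum_singleton, zero_mul, Finset.sum_const_zero,
    one_mul, zero_add, add_zero, neg_mul, Finset.sum_neg_distrib, mul_neg, Finset.mul_sum,
    Function.comp_apply]
  ring

theorem eq_zero_of_isotropic_of_orthogonal_timelike {n : ℕ} {S : Matrix (Fin n) (Fin n) ℝ}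
    (hS : S.PosDef) {lam y : Idx n → ℝ} (hlam : 0 < lam ⬝ᵥ S0Mat n S *ᵥ lam)
    (hiso : y ⬝ᵥ S0Mat n S *ᵥ y = 0) (horth : y ⬝ᵥ S0Mat n S *ᵥ lam = 0) : y = 0 := by
  rw [dotProduct_S0Mat_mulVec] at hlam hiso horth
  set a := lam (.inl 0)
  set b := lam (.inr (.inr 0))
  set v := lam ∘ .inr ∘ .inl
  set c := y (.inl 0)
  set d := y (.inr (.inr 0))
  set w := y ∘ .inr ∘ .inl
  have hP := hS.posSemidef.dotProduct_mulVec_nonneg v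
  have hR := hS.posSemidef.dotProduct_mulVec_nonneg w
  have hCS := hS.posSemidef.dotProduct_mulVec_sq_le w v
  simp only [star_trivial] at hP hR
  set P := v ⬝ᵥ S *ᵥ v
  set R := w ⬝ᵥ S *ᵥ w
  set M := w ⬝ᵥ S *ᵥ v
  have hab : 0 < a * b := by linarith
  have hAMGM : 2 * (a * b) * R ≤ M ^ 2 := by
    have hM_eq : M = c * b + d * a := by linarith
    have hR_eq : R = 2 * (c * d) := by linarith
    rw [hM_eq, hR_eq]
    nlinarith [sq_nonneg (c * b - d * a)]
  have hR0 : R = 0 := by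
    have : R * (a * b + b * a - P) ≤ 0 := by linarith
    exact le_antisymm (nonpos_of_mul_nonpos_left this hlam) hR
  have hw : w = 0 := by
    by_contra hw
    have := hS.dotProduct_mulVec_pos hw
    simp only [star_trivial] at this
    linarith
  have hM0 : M = 0 := by simp [M, hw]
  have hcd : c * d = 0 := by linarith
  have hcb : c * b + d * a = 0 := by linarith
  have hc : c ^ 2 * (a * b) = 0 := by linear_combination (c * a) * hcb - a ^ 2 * hcd
  have hd : d ^ 2 * (a * b) = 0 := by linear_combination (d * b) * hcb - b ^ 2 * hcd
  rw [mul_eq_zero, or_iff_left hab.ne', sq_eq_zero_iff] at hc hd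
  ext (i | i | i)
  · exact (Subsingleton.elim i 0) ▸ hc
  · exact congrFun hw i
  · exact (Subsingleton.elim i 0) ▸ hd

theorem stmt_1_general (n : ℕ) (S : Matrix (Fin n) (Fin n) ℝ) (hpos : S.PosDef)
    (lam : Idx n → ℝ)
    (h3 : 0 ≤ lam ⬝ᵥ (S0Mat n S).mulVec lam)
    (y : Idx n → ℝ) (hy : y ≠ 0) (hyiso : y ⬝ᵥ (S0Mat n S).mulVec y = 0)
    (horth : y ⬝ᵥ (S0Mat n S).mulVec lam = 0) :
    lam ⬝ᵥ (S0Mat n S).mulVec lam = 0 := by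
  by_contra hne
  exact hy (eq_zero_of_isotropic_of_orthogonal_timelike hpos (h3.lt_of_ne' hne) hyiso horth)

/-- If `λ ≥ 0` (i.e. `λ₁ ≥ 0`, `λ_{n+2} ≥ 0`, `S₀[λ] ≥ 0`) and `λ` is orthogonal to a
nonzero isotropic vector `y`, then `S₀[λ] = 0`. -/
theorem stmt_1 (n : ℕ) (S : Matrix (Fin n) (Fin n) ℝ) (hsym : S.IsSymm) (hpos : S.PosDef)
    (lam : Idx n → ℝ)
    (h1 : 0 ≤ lam (Sum.inl 0)) (h2 : 0 ≤ lam (Sum.inr (Sum.inr 0)))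
    (h3 : 0 ≤ lam ⬝ᵥ (S0Mat n S).mulVec lam)
    (y : Idx n → ℝ) (hy : y ≠ 0) (hyiso : y ⬝ᵥ (S0Mat n S).mulVec y = 0)
    (horth : y ⬝ᵥ (S0Mat n S).mulVec lam = 0) :
    lam ⬝ᵥ (S0Mat n S).mulVec lam = 0 :=
  stmt_1_general n S hpos lam h3 y hy hyiso horth
end

section
/- For U = [[α,β],[γ,δ]] ∈ SL₂(ℝ), the matrix U↓ := block diag(HUH, Iₙ, U), where H = diag(-1,1) and HUH is placed in the first 2×2 block acting on coordinates arranged as in S₁, satisfies S₁[U↓] = S₁ and det U↓ = 1; i.e. U↓ ∈ SO(S₁; ℝ). -/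
open Matrix

abbrev Idx1 (n : ℕ) := Fin 1 ⊕ Idx n ⊕ Fin 1

/-- `S₁ = [[0,0,1],[0,S₀,0],[1,0,0]]`. -/
def S1Mat (n : ℕ) (S : Matrix (Fin n) (Fin n) ℝ) : Matrix (Idx1 n) (Idx1 n) ℝ :=
  fun i j =>
    match i, j with
    | Sum.inl _, Sum.inr (Sum.inr _) => 1
    | Sum.inr (Sum.inr _), Sum.inl _ => 1
    | Sum.inr (Sum.inl a), Sum.inr (Sum.inl b) => S0Mat n S a b
    | _, _ => 0

/-- `U↓ = block diag(HUH, Iₙ, U)` with `H = diag(-1,1)`, `HUH = [[α,-β],[-γ,δ]]`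
acting on coordinates `(1,2)`, and `U` on coordinates `(n+3,n+4)`. -/
def Udown (n : ℕ) (α β γ δ : ℝ) : Matrix (Idx1 n) (Idx1 n) ℝ :=
  fun i j =>
    match i, j with
    | Sum.inl _, Sum.inl _ => α                                        -- (1,1)
    | Sum.inl _, Sum.inr (Sum.inl (Sum.inl _)) => -β                   -- (1,2)
    | Sum.inr (Sum.inl (Sum.inl _)), Sum.inl _ => -γ                   -- (2,1)
    | Sum.inr (Sum.inl (Sum.inl _)), Sum.inr (Sum.inl (Sum.inl _)) => δ -- (2,2)
    | Sum.inr (Sum.inl (Sum.inr (Sum.inl a))), Sum.inr (Sum.inl (Sum.inr (Sum.inl b))) =>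
        if a = b then 1 else 0                                         -- middle identity
    | Sum.inr (Sum.inl (Sum.inr (Sum.inr _))), Sum.inr (Sum.inl (Sum.inr (Sum.inr _))) => α
    | Sum.inr (Sum.inl (Sum.inr (Sum.inr _))), Sum.inr (Sum.inr _) => β -- (n+3,n+4)
    | Sum.inr (Sum.inr _), Sum.inr (Sum.inl (Sum.inr (Sum.inr _))) => γ -- (n+4,n+3)
    | Sum.inr (Sum.inr _), Sum.inr (Sum.inr _) => δ                     -- (n+4,n+4)
    | _, _ => 0


def reIdx (n : ℕ) : Idx1 n ≃ (Fin 1 ⊕ Fin 1) ⊕ ((Fin 1 ⊕ Fin 1) ⊕ Fin n) where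
  toFun i :=
    match i with
    | Sum.inl x => Sum.inl (Sum.inl x)
    | Sum.inr (Sum.inl (Sum.inl x)) => Sum.inl (Sum.inr x)
    | Sum.inr (Sum.inl (Sum.inr (Sum.inl a))) => Sum.inr (Sum.inr a)
    | Sum.inr (Sum.inl (Sum.inr (Sum.inr x))) => Sum.inr (Sum.inl (Sum.inl x))
    | Sum.inr (Sum.inr x) => Sum.inr (Sum.inl (Sum.inr x))
  invFun i :=
    match i with
    | Sum.inl (Sum.inl x) => Sum.inl x
    | Sum.inl (Sum.inr x) => Sum.inr (Sum.inl (Sum.inl x))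
    | Sum.inr (Sum.inr a) => Sum.inr (Sum.inl (Sum.inr (Sum.inl a)))
    | Sum.inr (Sum.inl (Sum.inl x)) => Sum.inr (Sum.inl (Sum.inr (Sum.inr x)))
    | Sum.inr (Sum.inl (Sum.inr x)) => Sum.inr (Sum.inr x)
  left_inv i := by rcases i with _ | ((_ | (_ | _)) | _) <;> rfl
  right_inv i := by rcases i with (_ | _) | ((_ | _) | _) <;> rfl

def blockA (α β γ δ : ℝ) : Matrix (Fin 1 ⊕ Fin 1) (Fin 1 ⊕ Fin 1) ℝ :=
  fun i j =>
    match i, j with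
    | Sum.inl _, Sum.inl _ => α
    | Sum.inl _, Sum.inr _ => -β
    | Sum.inr _, Sum.inl _ => -γ
    | Sum.inr _, Sum.inr _ => δ

def blockB (α β γ δ : ℝ) : Matrix (Fin 1 ⊕ Fin 1) (Fin 1 ⊕ Fin 1) ℝ :=
  fun i j =>
    match i, j with
    | Sum.inl _, Sum.inl _ => α
    | Sum.inl _, Sum.inr _ => β
    | Sum.inr _, Sum.inl _ => γ
    | Sum.inr _, Sum.inr _ => δ

lemma det_blockA (α β γ δ : ℝ) : (blockA α β γ δ).det = α * δ - β * γ := by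
  rw [← Matrix.det_submatrix_equiv_self (finSumFinEquiv (m := 1) (n := 1)).symm]
  rw [show ((blockA α β γ δ).submatrix ⇑(finSumFinEquiv (m := 1) (n := 1)).symm
        ⇑(finSumFinEquiv (m := 1) (n := 1)).symm : Matrix (Fin 2) (Fin 2) ℝ)
      = !![α, -β; -γ, δ] by
    ext i j
    fin_cases i <;> fin_cases j <;> rfl]
  rw [Matrix.det_fin_two_of]; ring

lemma det_blockB (α β γ δ : ℝ) : (blockB α β γ δ).det = α * δ - β * γ := by
  rw [← Matrix.det_submatrix_equiv_self (finSumFinEquiv (m := 1) (n := 1)).symm]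
  rw [show ((blockB α β γ δ).submatrix ⇑(finSumFinEquiv (m := 1) (n := 1)).symm
        ⇑(finSumFinEquiv (m := 1) (n := 1)).symm : Matrix (Fin 2) (Fin 2) ℝ)
      = !![α, β; γ, δ] by
    ext i j
    fin_cases i <;> fin_cases j <;> rfl]
  rw [Matrix.det_fin_two_of]

lemma Udown_eq (n : ℕ) (α β γ δ : ℝ) :
    Udown n α β γ δ =
      (Matrix.fromBlocks (blockA α β γ δ) 0 0
        (Matrix.fromBlocks (blockB α β γ δ) 0 0 (1 : Matrix (Fin n) (Fin n) ℝ))).submatrix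
        (reIdx n) (reIdx n) := by
  ext i j
  rcases i with _ | ((_ | (a | _)) | _) <;> rcases j with _ | ((_ | (b | _)) | _) <;>
    simp [Udown, reIdx, blockA, blockB, Matrix.fromBlocks, Matrix.one_apply]

set_option maxHeartbeats 2000000 in
/-- For `U ∈ SL₂(ℝ)`, `U↓ ∈ SO(S₁;ℝ)`: `S₁[U↓] = S₁` and `det U↓ = 1`. -/
theorem stmt_4 (n : ℕ) (S : Matrix (Fin n) (Fin n) ℝ) (hsym : S.IsSymm)
    (α β γ δ : ℝ) (hU : α * δ - β * γ = 1) :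
    (Udown n α β γ δ)ᵀ * S1Mat n S * Udown n α β γ δ = S1Mat n S ∧
      (Udown n α β γ δ).det = 1 := by
  constructor
  · ext i j
    rcases i with _ | ((_ | (a | _)) | _) <;> rcases j with _ | ((_ | (b | _)) | _) <;>
      simp [Matrix.mul_apply, S1Mat, S0Mat, Udown, Fintype.sum_sum_type] <;>
      first
        | linear_combination hU
        | linear_combination -hU
        | ring
  · rw [Udown_eq, Matrix.det_submatrix_equiv_self,
      Matrix.det_fromBlocks_zero₂₁, Matrix.det_fromBlocks_zero₂₁, det_blockA, det_blockB,
      Matrix.det_one, hU]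
    ring
end

section
/- Suppose a sequence of Fourier coefficients α : L₀# → ℂ satisfies the Maaß relation α(λ) = Σ_{d | ε(λ)} d^{k-1} α((1, μ/d, lm/d²)ᵀ) for all nonzero λ = (m, μ, l)ᵀ ∈ L₀#, where ε(λ) = gcd of the entries of S₀λ. Then α satisfies, for every prime p and every λ = (m,μ,l)ᵀ: α((pm, μ, l)ᵀ) + p^{k-1} α((m/p, μ/p, l)ᵀ) = α((m, μ, pl)ᵀ) + p^{k-1} α((m, μ/p, l/p)ᵀ), with the convention α(x) = 0 whenever x ∉ L₀#. -/
open Matrix Finset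

/-- `ε(λ) = gcd(S₀λ)` for `λ = (m, μ, l)ᵀ`: the gcd of `l`, the entries of `-Sμ`,
and `m` (here `S₀λ = (l, -Sμ, m)ᵀ`). -/
def epsOf (n : ℕ) (S : Matrix (Fin n) (Fin n) ℤ) (m : ℤ) (mu : Fin n → ℤ) (l : ℤ) : ℕ :=
  Nat.gcd m.natAbs (Nat.gcd l.natAbs (Finset.univ.gcd fun i => ((S.mulVec mu) i).natAbs))

/-!
The Maaß relation writes `α(λ)` as a divisor sum over `d ∣ ε(λ)` of a function of `μ` and `lm`
only, so all four terms are divisor sums of the single function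
`F d = d^(k-1) α((1, μ/d, plm/d²)ᵀ)`. Split the divisors of `ε((pm, μ, l)ᵀ)` according to
whether `p` divides them: those prime to `p` are the divisors of `ε(λ)` prime to `p`, and those
of the form `pe` give exactly the sum for `p^(k-1) α((m, μ/p, l/p)ᵀ)`; symmetrically for
`ε((m, μ, pl)ᵀ)`. So both sides are the same three sums. Since `S` is unimodular,
`gcd(Sμ) = gcd(μ)`, which is what makes `ε` behave well under `μ ↦ μ/p`.
-/

namespace Nat

variable {M : Type*} [AddCommMonoid M]

theorem sum_divisors_mul_filter_dvd {p : ℕ} (hp : p ≠ 0) (K : ℕ) (f : ℕ → M) :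
    ∑ d ∈ (p * K).divisors with p ∣ d, f d = ∑ e ∈ K.divisors, f (p * e) := by
  have himage : {d ∈ (p * K).divisors | p ∣ d} = K.divisors.image (p * ·) := by
    ext d
    simp only [mem_filter, mem_divisors, mem_image]
    constructor
    · rintro ⟨⟨hd, hpK⟩, e, rfl⟩
      exact ⟨e, ⟨(Nat.mul_dvd_mul_iff_left (pos_of_ne_zero hp)).1 hd, right_ne_zero_of_mul hpK⟩,
        rfl⟩
    · rintro ⟨e, ⟨he, hK⟩, rfl⟩
      exact ⟨⟨mul_dvd_mul_left p he, mul_ne_zero hp hK⟩, dvd_mul_right p e⟩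
  rw [himage, sum_image fun _ _ _ _ h => Nat.eq_of_mul_eq_mul_left (pos_of_ne_zero hp) h]

theorem filter_not_dvd_divisors_gcd_mul {p : ℕ} (hp : p.Prime) (a N : ℕ) :
    {d ∈ (gcd (p * a) N).divisors | ¬p ∣ d} = {d ∈ (gcd a N).divisors | ¬p ∣ d} := by
  ext d
  simp only [mem_filter, mem_divisors, dvd_gcd_iff, ne_eq, gcd_eq_zero_iff, mul_eq_zero,
    hp.ne_zero, false_or]
  refine and_congr_left fun hpd => ?_
  rw [((hp.coprime_iff_not_dvd.2 hpd).symm).dvd_mul_left]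

theorem sum_divisors_gcd_prime_mul {p : ℕ} (hp : p.Prime) (a N : ℕ) (f : ℕ → M) :
    ∑ d ∈ (gcd (p * a) N).divisors, f d =
      ∑ d ∈ (gcd a N).divisors with ¬p ∣ d, f d +
        if p ∣ N then ∑ e ∈ (gcd a (N / p)).divisors, f (p * e) else 0 := by
  rw [← sum_filter_add_sum_filter_not _ (p ∣ ·), filter_not_dvd_divisors_gcd_mul hp, add_comm]
  congr 1
  split_ifs with hN
  · obtain ⟨N', rfl⟩ := hN
    rw [Nat.mul_div_cancel_left _ hp.pos, gcd_mul_left, sum_divisors_mul_filter_dvd hp.ne_zero]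
  · refine sum_eq_zero fun d hd => absurd ?_ hN
    simp only [mem_filter, mem_divisors] at hd
    exact hd.2.trans (hd.1.1.trans (gcd_dvd_right _ _))

theorem sum_divisors_gcd_prime_mul_symm {p : ℕ} (hp : p.Prime) (a b c : ℕ) (f : ℕ → M) :
    (∑ d ∈ (gcd (p * a) (gcd b c)).divisors, f d +
      if p ∣ a ∧ p ∣ c then ∑ e ∈ (gcd (a / p) (gcd b (c / p))).divisors, f (p * e) else 0) =
    ∑ d ∈ (gcd a (gcd (p * b) c)).divisors, f d +
      if p ∣ b ∧ p ∣ c then ∑ e ∈ (gcd a (gcd (b / p) (c / p))).divisors, f (p * e) else 0 := by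
  rw [gcd_left_comm a, sum_divisors_gcd_prime_mul hp, sum_divisors_gcd_prime_mul hp,
    gcd_left_comm b a c]
  have hdiv : ∀ x y z, (if p ∣ gcd x y then ∑ e ∈ (gcd z (gcd x y / p)).divisors, f (p * e)
      else 0) = if p ∣ x ∧ p ∣ y then ∑ e ∈ (gcd z (gcd (x / p) (y / p))).divisors, f (p * e)
      else 0 := by
    intro x y z
    simp only [dvd_gcd_iff]
    split_ifs with h
    · rw [gcd_div h.1 h.2]
    · rfl
  rw [hdiv, hdiv, gcd_left_comm b]
  abel

end Nat

theorem Matrix.gcd_natAbs_dvd_gcd_natAbs_mulVec {m n : Type*} [Fintype m] [Fintype n]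
    (A : Matrix m n ℤ) (v : n → ℤ) :
    univ.gcd (fun j => (v j).natAbs) ∣ univ.gcd (fun i => ((A *ᵥ v) i).natAbs) :=
  Finset.dvd_gcd fun _ _ => Int.natCast_dvd.1 <| Finset.dvd_sum fun j _ =>
    (Int.natCast_dvd.2 (Finset.gcd_dvd (f := fun j => (v j).natAbs) (mem_univ j))).mul_left _

theorem Matrix.gcd_natAbs_mulVec_of_isUnit_det {n : Type*} [Fintype n] [DecidableEq n]
    {S : Matrix n n ℤ} (hS : IsUnit S.det) (v : n → ℤ) :
    univ.gcd (fun i => ((S *ᵥ v) i).natAbs) = univ.gcd (fun i => (v i).natAbs) := by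
  refine Nat.dvd_antisymm ?_ (S.gcd_natAbs_dvd_gcd_natAbs_mulVec v)
  simpa [mulVec_mulVec, nonsing_inv_mul S hS] using
    S⁻¹.gcd_natAbs_dvd_gcd_natAbs_mulVec (S *ᵥ v)

theorem Finset.gcd_natAbs_ediv {ι : Type*} (s : Finset ι) {v : ι → ℤ} {p : ℕ}
    (h : ∀ i ∈ s, (p : ℤ) ∣ v i) :
    s.gcd (fun i => (v i / p).natAbs) = s.gcd (fun i => (v i).natAbs) / p := by
  rcases p.eq_zero_or_pos with rfl | hp
  · simp [Finset.gcd_eq_zero_iff]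
  have hmul : s.gcd (fun i => (v i).natAbs) = s.gcd (fun i => p * (v i / p).natAbs) :=
    Finset.gcd_congr rfl fun i hi => by
      conv_lhs => rw [← Int.mul_ediv_cancel' (h i hi)]
      rw [Int.natAbs_mul, Int.natAbs_natCast]
  rw [hmul, Finset.gcd_mul_left, normalize_eq, Nat.mul_div_cancel_left _ hp]

/-- The right-hand side of the Maaß relation, with `β μ N` standing for `α((1, μ, N)ᵀ)`.
Unlike `α`, it vanishes at `λ = 0`, where the relation is not assumed. -/
def maassLift (n : ℕ) (S : Matrix (Fin n) (Fin n) ℤ) (k : ℕ) (β : (Fin n → ℤ) → ℤ → ℂ)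
    (m : ℤ) (mu : Fin n → ℤ) (l : ℤ) : ℂ :=
  ∑ d ∈ (epsOf n S m mu l).divisors,
    (d : ℂ) ^ (k - 1) * β (fun i => mu i / (d : ℤ)) (l * m / (d : ℤ) ^ 2)

section Maass

variable {n : ℕ} {S : Matrix (Fin n) (Fin n) ℤ}

theorem epsOf_eq_of_isUnit_det (hS : IsUnit S.det) (m : ℤ) (mu : Fin n → ℤ) (l : ℤ) :
    epsOf n S m mu l = Nat.gcd m.natAbs (Nat.gcd l.natAbs (univ.gcd fun i => (mu i).natAbs)) := by
  rw [epsOf, S.gcd_natAbs_mulVec_of_isUnit_det hS]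

theorem maassLift_hecke (hS : IsUnit S.det) (k : ℕ) (β : (Fin n → ℤ) → ℤ → ℂ) {p : ℕ}
    (hp : p.Prime) (m : ℤ) (mu : Fin n → ℤ) (l : ℤ) :
    maassLift n S k β ((p : ℤ) * m) mu l +
        (p : ℂ) ^ (k - 1) *
          (if (p : ℤ) ∣ m ∧ ∀ i, (p : ℤ) ∣ mu i then
            maassLift n S k β (m / (p : ℤ)) (fun i => mu i / (p : ℤ)) l else 0)
      = maassLift n S k β m mu ((p : ℤ) * l) +
        (p : ℂ) ^ (k - 1) *
          (if (∀ i, (p : ℤ) ∣ mu i) ∧ (p : ℤ) ∣ l then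
            maassLift n S k β m (fun i => mu i / (p : ℤ)) (l / (p : ℤ)) else 0) := by
  set c := univ.gcd fun i => (mu i).natAbs
  set F : ℕ → ℂ := fun q =>
    (q : ℂ) ^ (k - 1) * β (fun i => mu i / (q : ℤ)) (p * (l * m) / (q : ℤ) ^ 2)
  have hF (e : ℕ) : F (p * e) =
      (p : ℂ) ^ (k - 1) * ((e : ℂ) ^ (k - 1) *
        β (fun i => mu i / (p : ℤ) / (e : ℤ)) (l * m / p / (e : ℤ) ^ 2)) := by
    have hp0 : (0 : ℤ) ≤ p := Int.natCast_nonneg p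
    have hlm : (p : ℤ) * (l * m) / ((p : ℤ) * e) ^ 2 = l * m / (p * (e : ℤ) ^ 2) := by
      rw [show ((p : ℤ) * e) ^ 2 = p * (p * e ^ 2) by ring,
        Int.mul_ediv_mul_of_pos _ _ (by exact_mod_cast hp.pos)]
    simp only [F, Nat.cast_mul, hlm, Int.ediv_ediv_of_nonneg hp0]
    ring
  have hmu : (∀ i, (p : ℤ) ∣ mu i) ↔ p ∣ c := by
    simp only [c, Finset.dvd_gcd_iff, mem_univ, true_imp_iff, Int.natCast_dvd]
  have hpm : maassLift n S k β ((p : ℤ) * m) mu l =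
      ∑ d ∈ (Nat.gcd (p * m.natAbs) (Nat.gcd l.natAbs c)).divisors, F d := by
    rw [maassLift, epsOf_eq_of_isUnit_det hS, Int.natAbs_mul, Int.natAbs_natCast]
    exact sum_congr rfl fun d _ => by simp only [F, mul_left_comm l]
  have hpl : maassLift n S k β m mu ((p : ℤ) * l) =
      ∑ d ∈ (Nat.gcd m.natAbs (Nat.gcd (p * l.natAbs) c)).divisors, F d := by
    rw [maassLift, epsOf_eq_of_isUnit_det hS, Int.natAbs_mul, Int.natAbs_natCast]
    exact sum_congr rfl fun d _ => by simp only [F, mul_assoc]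
  have hdm : (p : ℂ) ^ (k - 1) *
      (if (p : ℤ) ∣ m ∧ ∀ i, (p : ℤ) ∣ mu i then
        maassLift n S k β (m / (p : ℤ)) (fun i => mu i / (p : ℤ)) l else 0) =
      if p ∣ m.natAbs ∧ p ∣ c then
        ∑ e ∈ (Nat.gcd (m.natAbs / p) (Nat.gcd l.natAbs (c / p))).divisors, F (p * e) else 0 := by
    simp only [hmu]
    simp only [Int.natCast_dvd]
    split_ifs with h
    · rw [maassLift, epsOf_eq_of_isUnit_det hS, Int.natAbs_ediv_of_dvd (Int.natCast_dvd.2 h.1),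
        Int.natAbs_natCast, univ.gcd_natAbs_ediv fun i _ => hmu.2 h.2 i, mul_sum]
      exact sum_congr rfl fun e _ => by rw [hF, Int.mul_ediv_assoc _ (Int.natCast_dvd.2 h.1)]
    · rw [mul_zero]
  have hdl : (p : ℂ) ^ (k - 1) *
      (if (∀ i, (p : ℤ) ∣ mu i) ∧ (p : ℤ) ∣ l then
        maassLift n S k β m (fun i => mu i / (p : ℤ)) (l / (p : ℤ)) else 0) =
      if p ∣ l.natAbs ∧ p ∣ c then
        ∑ e ∈ (Nat.gcd m.natAbs (Nat.gcd (l.natAbs / p) (c / p))).divisors, F (p * e) else 0 := by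
    simp only [hmu]
    simp only [Int.natCast_dvd, and_comm (a := p ∣ c)]
    split_ifs with h
    · rw [maassLift, epsOf_eq_of_isUnit_det hS, Int.natAbs_ediv_of_dvd (Int.natCast_dvd.2 h.1),
        Int.natAbs_natCast, univ.gcd_natAbs_ediv fun i _ => hmu.2 h.2 i, mul_sum]
      exact sum_congr rfl fun e _ => by rw [hF, Int.mul_ediv_assoc' _ (Int.natCast_dvd.2 h.1)]
    · rw [mul_zero]
  rw [hpm, hpl, hdm, hdl]
  exact Nat.sum_divisors_gcd_prime_mul_symm hp _ _ _ F

end Maass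

theorem stmt_8_general (n k : ℕ) (S : Matrix (Fin n) (Fin n) ℤ) (hdet : S.det = 1)
    (α : ℤ → (Fin n → ℤ) → ℤ → ℂ)
    (hmaass : ∀ (m : ℤ) (mu : Fin n → ℤ) (l : ℤ), ¬(m = 0 ∧ mu = 0 ∧ l = 0) →
      α m mu l = ∑ d ∈ (epsOf n S m mu l).divisors,
        (d : ℂ) ^ (k - 1) * α 1 (fun i => mu i / (d : ℤ)) (l * m / (d : ℤ) ^ 2)) :
    ∀ p : ℕ, p.Prime → ∀ (m : ℤ) (mu : Fin n → ℤ) (l : ℤ),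
      α ((p : ℤ) * m) mu l +
        (p : ℂ) ^ (k - 1) *
          (if (p : ℤ) ∣ m ∧ ∀ i, (p : ℤ) ∣ mu i then
            α (m / (p : ℤ)) (fun i => mu i / (p : ℤ)) l else 0)
      = α m mu ((p : ℤ) * l) +
        (p : ℂ) ^ (k - 1) *
          (if (∀ i, (p : ℤ) ∣ mu i) ∧ (p : ℤ) ∣ l then
            α m (fun i => mu i / (p : ℤ)) (l / (p : ℤ)) else 0) := by
  intro p hp m mu l
  by_cases h0 : m = 0 ∧ mu = 0 ∧ l = 0
  · obtain ⟨rfl, rfl, rfl⟩ := h0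
    simp
  have hp0 : (p : ℤ) ≠ 0 := by exact_mod_cast hp.ne_zero
  have hne {x y : ℤ} {ν : Fin n → ℤ} (hx : x = 0 → m = 0) (hν : ν = 0 → mu = 0)
      (hy : y = 0 → l = 0) : ¬(x = 0 ∧ ν = 0 ∧ y = 0) :=
    fun h => h0 ⟨hx h.1, hν h.2.1, hy h.2.2⟩
  have hmu_ne (hmu : ∀ i, (p : ℤ) ∣ mu i) : (fun i => mu i / (p : ℤ)) = 0 → mu = 0 :=
    fun h => funext fun i => Int.eq_zero_of_ediv_eq_zero (hmu i) (congrFun h i)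
  convert maassLift_hecke (hdet ▸ isUnit_one) k (α 1) hp m mu l using 2
  · exact hmaass _ _ _ (hne (fun h => (mul_eq_zero.1 h).resolve_left hp0) id id)
  · split_ifs with h
    · exact congrArg _ (hmaass _ _ _ (hne (Int.eq_zero_of_ediv_eq_zero h.1) (hmu_ne h.2) id))
    · rfl
  · exact hmaass _ _ _ (hne id id fun h => (mul_eq_zero.1 h).resolve_left hp0)
  · split_ifs with h
    · exact congrArg _ (hmaass _ _ _ (hne id (hmu_ne h.1) (Int.eq_zero_of_ediv_eq_zero h.2)))
    · rfl

/-- If the Fourier coefficients `α` satisfy the Maaß relation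
`α(λ) = Σ_{d ∣ ε(λ)} d^{k-1} α((1, μ/d, lm/d²)ᵀ)` for all nonzero `λ = (m,μ,l)ᵀ`,
then they satisfy the single-step relation (iii), with the convention `α(x) = 0`
for `x ∉ L₀# = ℤ^{n+2}` (S unimodular). -/
theorem stmt_8 (n k : ℕ) (S : Matrix (Fin n) (Fin n) ℤ) (hsym : S.IsSymm)
    (heven : ∀ i, 2 ∣ S i i) (hdet : S.det = 1)
    (hpos : (S.map (Int.cast : ℤ → ℝ)).PosDef)
    (α : ℤ → (Fin n → ℤ) → ℤ → ℂ)
    (hmaass : ∀ (m : ℤ) (mu : Fin n → ℤ) (l : ℤ), ¬(m = 0 ∧ mu = 0 ∧ l = 0) →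
      α m mu l = ∑ d ∈ (epsOf n S m mu l).divisors,
        (d : ℂ) ^ (k - 1) * α 1 (fun i => mu i / (d : ℤ)) (l * m / (d : ℤ) ^ 2)) :
    ∀ p : ℕ, p.Prime → ∀ (m : ℤ) (mu : Fin n → ℤ) (l : ℤ),
      α ((p : ℤ) * m) mu l +
        (p : ℂ) ^ (k - 1) *
          (if (p : ℤ) ∣ m ∧ ∀ i, (p : ℤ) ∣ mu i then
            α (m / (p : ℤ)) (fun i => mu i / (p : ℤ)) l else 0)
      = α m mu ((p : ℤ) * l) +
        (p : ℂ) ^ (k - 1) *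
          (if (∀ i, (p : ℤ) ∣ mu i) ∧ (p : ℤ) ∣ l then
            α m (fun i => mu i / (p : ℤ)) (l / (p : ℤ)) else 0) :=
  stmt_8_general n k S hdet α hmaass
end

section
/- If f is a cusp form for Γ_S of weight k, i.e. holomorphic on the orthogonal half-space H_S, invariant under the weight-k slash action of Γ_S, and such that w ↦ S₀[Im w]^{k/2}|f(w)| is bounded on H_S, and f satisfies f|_k Γ_S R Γ_S = ρ f for some R ∈ Δ_S(r) with eigenvalue ρ ∈ ℂ, then |ρ| ≤ r^{-k/2} ρ₀ where ρ₀ = #(Γ_S\Γ_S R Γ_S). (Abstract version: if g := Σ_{j=1}^{ρ₀} f|_k M_j = ρ f with each M_j ∈ (1/√r)·SO⁺(S₁;ℝ) scaled integrally, and the Petersson norm-type sup S₀[Im w]^{k/2}|f(w)| is finite and attained, then |ρ| ≤ r^{-k/2}ρ₀.) -/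
/-!
A point `w ∈ H_S` lifts to the `S₁`-isotropic vector `ŵ = (-S₀[w]/2, w, 1)`, and a real `M` with
`MᵀS₁M = r S₁` acts linearly on these lifts: `M ŵ = M{w} · ŵ'` for `w' = M⟨w⟩`. For an isotropic
complex vector `z` one has `S₁[Im (b z)] = |b|² S₁[Im z]`, while `S₁[Im ŵ] = S₀[Im w]`; applying
`S₁[Im ·]` to both sides gives `|M{w}|² S₀[Im M⟨w⟩] = r S₀[Im w]`. Hence, for
`φ(w) = S₀[Im w]^{k/2} |f(w)|`, `S₀[Im w]^{k/2} |(f|_k M)(w)| = r^{-k/2} φ(M⟨w⟩)`. At the point `w₀`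
where `φ` is maximal, the eigen-equation gives `|ρ| φ(w₀) ≤ ρ₀ r^{-k/2} φ(w₀)`, and `φ(w₀) > 0`
because `f ≢ 0`.
-/

open Matrix Complex

/-- `S₀[v] = vᵀS₀v` for real vectors. -/
def quadR (n : ℕ) (S : Matrix (Fin n) (Fin n) ℝ) (v : Idx n → ℝ) : ℝ :=
  v ⬝ᵥ (S0Mat n S).mulVec v

/-- `S₀[w] = wᵀS₀w`, bilinear extension to `ℂ^{n+2}`. -/
noncomputable def quadC (n : ℕ) (S : Matrix (Fin n) (Fin n) ℝ) (w : Idx n → ℂ) : ℂ :=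
  w ⬝ᵥ ((S0Mat n S).map (Complex.ofReal)).mulVec w

/-- The orthogonal half-space `H_S = {w = (τ,z,τ')ᵀ : S₀[Im w] > 0, τ, τ' ∈ ℍ}`. -/
def orthHS (n : ℕ) (S : Matrix (Fin n) (Fin n) ℝ) : Set (Idx n → ℂ) :=
  {w | 0 < quadR n S (fun i => (w i).im) ∧
       0 < (w (Sum.inl 0)).im ∧ 0 < (w (Sum.inr (Sum.inr 0))).im}

/-- `M{w} = -(γ/2)S₀[w] + dᵀw + δ` for `M = [[α,aᵀ,β],[b,K,c],[γ,dᵀ,δ]]`. -/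
noncomputable def braceM (n : ℕ) (S : Matrix (Fin n) (Fin n) ℝ)
    (M : Matrix (Idx1 n) (Idx1 n) ℝ) (w : Idx n → ℂ) : ℂ :=
  -((M (Sum.inr (Sum.inr 0)) (Sum.inl 0) : ℂ) / 2) * quadC n S w
    + (fun j => (M (Sum.inr (Sum.inr 0)) (Sum.inr (Sum.inl j)) : ℂ)) ⬝ᵥ w
    + (M (Sum.inr (Sum.inr 0)) (Sum.inr (Sum.inr 0)) : ℂ)

/-- `M⟨w⟩ = (-(1/2)S₀[w]·b + Kw + c)·M{w}⁻¹`. -/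
noncomputable def angleM (n : ℕ) (S : Matrix (Fin n) (Fin n) ℝ)
    (M : Matrix (Idx1 n) (Idx1 n) ℝ) (w : Idx n → ℂ) : Idx n → ℂ :=
  fun i =>
    (-(1 / 2) * quadC n S w * (M (Sum.inr (Sum.inl i)) (Sum.inl 0) : ℂ)
      + (fun j => (M (Sum.inr (Sum.inl i)) (Sum.inr (Sum.inl j)) : ℂ)) ⬝ᵥ w
      + (M (Sum.inr (Sum.inl i)) (Sum.inr (Sum.inr 0)) : ℂ)) * (braceM n S M w)⁻¹

namespace Matrix

variable {ι : Type*} [Fintype ι]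

theorem mulVec_dotProduct_mulVec_mulVec {R : Type*} [CommSemiring R] (M A : Matrix ι ι R)
    (x y : ι → R) : M *ᵥ x ⬝ᵥ A *ᵥ (M *ᵥ y) = x ⬝ᵥ (Mᵀ * A * M) *ᵥ y := by
  simp only [← mulVec_mulVec, dotProduct_mulVec x Mᵀ, vecMul_transpose]

theorem ofReal_dotProduct_mulVec (A : Matrix ι ι ℝ) (x y : ι → ℝ) :
    ((x ⬝ᵥ A *ᵥ y : ℝ) : ℂ) = (fun i => (x i : ℂ)) ⬝ᵥ A.map ofReal *ᵥ fun i => (y i : ℂ) := by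
  simp [dotProduct, mulVec]

theorem im_map_ofReal_mulVec (A : Matrix ι ι ℝ) (z : ι → ℂ) :
    (fun i => ((A.map ofReal *ᵥ z) i).im) = A *ᵥ fun i => (z i).im := by
  ext i
  simp [mulVec, dotProduct, Complex.im_sum]

theorem im_smul_dotProduct_of_isotropic (A : Matrix ι ι ℝ) {z : ι → ℂ}
    (hz : z ⬝ᵥ A.map ofReal *ᵥ z = 0) (b : ℂ) :
    (fun i => ((b • z) i).im) ⬝ᵥ A *ᵥ (fun i => ((b • z) i).im)
      = ‖b‖ ^ 2 * ((fun i => (z i).im) ⬝ᵥ A *ᵥ fun i => (z i).im) := by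
  set x : ι → ℝ := fun i => (z i).re
  set y : ι → ℝ := fun i => (z i).im
  have hxy : z = (fun i => (x i : ℂ)) + I • fun i => (y i : ℂ) := by
    ext i : 1
    simp [x, y, mul_comm I, Complex.re_add_im]
  have hsplit : z ⬝ᵥ A.map ofReal *ᵥ z
      = ((x ⬝ᵥ A *ᵥ x - y ⬝ᵥ A *ᵥ y : ℝ) : ℂ) + I * ((x ⬝ᵥ A *ᵥ y + y ⬝ᵥ A *ᵥ x : ℝ) : ℂ) := by
    conv_lhs => rw [hxy]
    simp only [mulVec_add, mulVec_smul, dotProduct_add, add_dotProduct, dotProduct_smul,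
      smul_dotProduct, smul_eq_mul, ← ofReal_dotProduct_mulVec]
    push_cast
    linear_combination ((y ⬝ᵥ A *ᵥ y : ℝ) : ℂ) * I_mul_I
  rw [hsplit] at hz
  have hQ : x ⬝ᵥ A *ᵥ x - y ⬝ᵥ A *ᵥ y = 0 := by simpa using congrArg re hz
  have hB : x ⬝ᵥ A *ᵥ y + y ⬝ᵥ A *ᵥ x = 0 := by simpa using congrArg im hz
  have him : (fun i => ((b • z) i).im) = b.re • y + b.im • x := by
    ext i
    simp [x, y, Complex.mul_im]
  rw [him, Complex.sq_norm, Complex.normSq_apply]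
  simp only [mulVec_add, mulVec_smul, dotProduct_add, add_dotProduct, dotProduct_smul,
    smul_dotProduct, smul_eq_mul]
  linear_combination b.im ^ 2 * hQ + b.re * b.im * hB

theorem transpose_mul_mul_eq_smul {r : ℝ} (hr : 0 < r) {M A : Matrix ι ι ℝ}
    (h : ((Real.sqrt r)⁻¹ • M)ᵀ * A * ((Real.sqrt r)⁻¹ • M) = A) :
    Mᵀ * A * M = r • A := by
  rw [transpose_smul, smul_mul, smul_mul, Matrix.mul_smul, smul_smul, ← mul_inv,
    Real.mul_self_sqrt hr.le] at h
  conv_rhs => rw [← h, smul_smul, mul_inv_cancel₀ hr.ne', one_smul]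

theorem map_ofReal_transpose_mul_mul {r : ℝ} {M A : Matrix ι ι ℝ} (h : Mᵀ * A * M = r • A) :
    (M.map ofReal)ᵀ * A.map ofReal * M.map ofReal = (r : ℂ) • A.map ofReal := by
  change (M.map ofRealHom)ᵀ * A.map ofRealHom * M.map ofRealHom = (r : ℂ) • A.map ofRealHom
  rw [← transpose_map, ← Matrix.map_mul, ← Matrix.map_mul, h]
  ext
  simp

end Matrix

section OrthogonalHalfSpace

variable {n : ℕ} {S : Matrix (Fin n) (Fin n) ℝ}

noncomputable def isotropicLift (n : ℕ) (S : Matrix (Fin n) (Fin n) ℝ) (w : Idx n → ℂ) :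
    Idx1 n → ℂ :=
  Sum.elim (fun _ => -quadC n S w / 2) (Sum.elim w fun _ => 1)

theorem sumElim_dotProduct_S1Mat_mulVec (a c : ℂ) (v : Idx n → ℂ) :
    Sum.elim (fun _ => a) (Sum.elim v fun _ => c)
        ⬝ᵥ (S1Mat n S).map ofReal *ᵥ Sum.elim (fun _ => a) (Sum.elim v fun _ => c)
      = 2 * a * c + quadC n S v := by
  simp only [dotProduct, mulVec, map_apply, Fintype.sum_sum_type, Finset.univ_unique,
    Fin.default_eq_zero, Finset.sum_singleton, Sum.elim_inl, Sum.elim_inr, S1Mat, quadC,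
    ofReal_zero, ofReal_one, zero_mul, one_mul, Finset.sum_const_zero]
  ring_nf

theorem isotropicLift_isotropic (w : Idx n → ℂ) :
    isotropicLift n S w ⬝ᵥ (S1Mat n S).map ofReal *ᵥ isotropicLift n S w = 0 := by
  rw [isotropicLift, sumElim_dotProduct_S1Mat_mulVec]
  ring

theorem quadForm_S1Mat_im_isotropicLift (w : Idx n → ℂ) :
    (fun i => (isotropicLift n S w i).im) ⬝ᵥ S1Mat n S *ᵥ (fun i => (isotropicLift n S w i).im)
      = quadR n S fun i => (w i).im := by
  simp [dotProduct, mulVec, Fintype.sum_sum_type, S1Mat, quadR, isotropicLift]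

theorem braceM_ne_zero_of_angleM_mem {M : Matrix (Idx1 n) (Idx1 n) ℝ} {w : Idx n → ℂ}
    (h : angleM n S M w ∈ orthHS n S) : braceM n S M w ≠ 0 := by
  intro h0
  have := h.2.1
  simp [angleM, h0] at this

theorem quadC_smul (c : ℂ) (v : Idx n → ℂ) : quadC n S (c • v) = c ^ 2 * quadC n S v := by
  simp only [quadC, mulVec_smul, dotProduct_smul, smul_dotProduct, smul_eq_mul]
  ring

theorem mulVec_isotropicLift {r : ℝ} {M : Matrix (Idx1 n) (Idx1 n) ℝ}
    (hM : Mᵀ * S1Mat n S * M = r • S1Mat n S) {w : Idx n → ℂ} (hb : braceM n S M w ≠ 0) :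
    M.map ofReal *ᵥ isotropicLift n S w
      = braceM n S M w • isotropicLift n S (angleM n S M w) := by
  set u := M.map ofReal *ᵥ isotropicLift n S w
  set b := braceM n S M w
  set w' := angleM n S M w
  have hlast : u (Sum.inr (Sum.inr 0)) = b := by
    simp only [u, b, mulVec, dotProduct, map_apply, Fintype.sum_sum_type, Finset.univ_unique,
      Fin.default_eq_zero, Finset.sum_singleton, Sum.elim_inl, Sum.elim_inr, isotropicLift, braceM]
    ring
  have hmid : ∀ i, u (Sum.inr (Sum.inl i)) = b * w' i := fun i => by
    rw [show w' i = _ * b⁻¹ from rfl, mul_comm, inv_mul_cancel_right₀ hb]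
    simp only [u, mulVec, dotProduct, map_apply, Fintype.sum_sum_type, Finset.univ_unique,
      Fin.default_eq_zero, Finset.sum_singleton, Sum.elim_inl, Sum.elim_inr, isotropicLift]
    ring
  have hu : u = Sum.elim (fun _ => u (Sum.inl 0)) (Sum.elim (b • w') fun _ => b) := by
    ext (i | i | i)
    · rw [Fin.fin_one_eq_zero i]; rfl
    · exact hmid i
    · rw [Fin.fin_one_eq_zero i]; exact hlast
  have hnull : u ⬝ᵥ (S1Mat n S).map ofReal *ᵥ u = 0 := by
    rw [mulVec_dotProduct_mulVec_mulVec, map_ofReal_transpose_mul_mul hM, smul_mulVec,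
      dotProduct_smul, isotropicLift_isotropic, smul_zero]
  rw [hu, sumElim_dotProduct_S1Mat_mulVec, quadC_smul] at hnull
  have hfirst : u (Sum.inl 0) = b * (-quadC n S w' / 2) :=
    mul_left_cancel₀ (mul_ne_zero two_ne_zero hb) (by linear_combination hnull)
  rw [hu]
  ext (i | i | i)
  · exact hfirst
  · rfl
  · simp [isotropicLift]

theorem sq_norm_braceM_mul_quadR_im_angleM {r : ℝ} {M : Matrix (Idx1 n) (Idx1 n) ℝ}
    (hM : Mᵀ * S1Mat n S * M = r • S1Mat n S) {w : Idx n → ℂ} (hb : braceM n S M w ≠ 0) :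
    ‖braceM n S M w‖ ^ 2 * quadR n S (fun i => (angleM n S M w i).im)
      = r * quadR n S fun i => (w i).im := by
  set z := isotropicLift n S w
  set z' := isotropicLift n S (angleM n S M w)
  calc ‖braceM n S M w‖ ^ 2 * quadR n S (fun i => (angleM n S M w i).im)
      = ‖braceM n S M w‖ ^ 2 * ((fun i => (z' i).im) ⬝ᵥ S1Mat n S *ᵥ fun i => (z' i).im) := by
        rw [quadForm_S1Mat_im_isotropicLift]
    _ = (fun i => ((braceM n S M w • z') i).im)
          ⬝ᵥ S1Mat n S *ᵥ (fun i => ((braceM n S M w • z') i).im) :=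
        (im_smul_dotProduct_of_isotropic _ (isotropicLift_isotropic _) _).symm
    _ = M *ᵥ (fun i => (z i).im) ⬝ᵥ S1Mat n S *ᵥ (M *ᵥ fun i => (z i).im) := by
        rw [← mulVec_isotropicLift hM hb, im_map_ofReal_mulVec]
    _ = r * quadR n S fun i => (w i).im := by
        rw [mulVec_dotProduct_mulVec_mulVec, hM, smul_mulVec, dotProduct_smul, smul_eq_mul,
          quadForm_S1Mat_im_isotropicLift]

end OrthogonalHalfSpace

theorem rpow_half_mul_zpow_neg (k : ℕ) {β r Q Q' : ℝ} (hβ : 0 < β) (hr : 0 < r) (hQ' : 0 ≤ Q')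
    (h : β ^ 2 * Q' = r * Q) :
    Q ^ ((k : ℝ) / 2) * β ^ (-(k : ℤ)) = r ^ (-(k : ℝ) / 2) * Q' ^ ((k : ℝ) / 2) := by
  have hQ : Q = r⁻¹ * (β ^ 2 * Q') := by rw [h, inv_mul_cancel_left₀ hr.ne']
  have hβk : (β ^ 2) ^ ((k : ℝ) / 2) = β ^ k := by
    rw [← Real.rpow_natCast β 2, ← Real.rpow_mul hβ.le, ← Real.rpow_natCast]
    congr 1
    push_cast
    ring
  rw [hQ, Real.mul_rpow (inv_nonneg.2 hr.le) (by positivity), Real.mul_rpow (by positivity) hQ',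
    hβk, Real.inv_rpow hr.le, ← Real.rpow_neg hr.le, neg_div, _root_.zpow_neg, zpow_natCast]
  field_simp

theorem rpow_mul_norm_slash_le {n k : ℕ} {S : Matrix (Fin n) (Fin n) ℝ} {r : ℝ} (hr : 0 < r)
    {f : (Idx n → ℂ) → ℂ} {M : Matrix (Idx1 n) (Idx1 n) ℝ}
    (hM : Mᵀ * S1Mat n S * M = r • S1Mat n S) {w₀ : Idx n → ℂ}
    (hMw₀ : angleM n S M w₀ ∈ orthHS n S)
    (hsup : ∀ w ∈ orthHS n S, (quadR n S fun i => (w i).im) ^ ((k : ℝ) / 2) * ‖f w‖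
        ≤ (quadR n S fun i => (w₀ i).im) ^ ((k : ℝ) / 2) * ‖f w₀‖) :
    (quadR n S fun i => (w₀ i).im) ^ ((k : ℝ) / 2)
        * ‖f (angleM n S M w₀) * braceM n S M w₀ ^ (-(k : ℤ))‖
      ≤ r ^ (-(k : ℝ) / 2)
        * ((quadR n S fun i => (w₀ i).im) ^ ((k : ℝ) / 2) * ‖f w₀‖) := by
  have hb := braceM_ne_zero_of_angleM_mem hMw₀
  calc (quadR n S fun i => (w₀ i).im) ^ ((k : ℝ) / 2)
        * ‖f (angleM n S M w₀) * braceM n S M w₀ ^ (-(k : ℤ))‖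
      = (quadR n S fun i => (w₀ i).im) ^ ((k : ℝ) / 2) * ‖braceM n S M w₀‖ ^ (-(k : ℤ))
          * ‖f (angleM n S M w₀)‖ := by
        rw [norm_mul, norm_zpow]
        ring
    _ = r ^ (-(k : ℝ) / 2) * ((quadR n S fun i => (angleM n S M w₀ i).im) ^ ((k : ℝ) / 2)
          * ‖f (angleM n S M w₀)‖) := by
        rw [rpow_half_mul_zpow_neg k (norm_pos_iff.2 hb) hr hMw₀.1.le
          (sq_norm_braceM_mul_quadR_im_angleM hM hb), mul_assoc]
    _ ≤ _ := mul_le_mul_of_nonneg_left (hsup _ hMw₀) (Real.rpow_nonneg hr.le _)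

theorem stmt_14_general (n k : ℕ) (S : Matrix (Fin n) (Fin n) ℝ) (r ρ₀ : ℕ) (hr : 1 ≤ r)
    (f : (Idx n → ℂ) → ℂ)
    (M : Fin ρ₀ → Matrix (Idx1 n) (Idx1 n) ℝ)
    (horth : ∀ j, ((Real.sqrt r)⁻¹ • M j)ᵀ * S1Mat n S * ((Real.sqrt r)⁻¹ • M j)
        = S1Mat n S)
    (hplus : ∀ j, ∀ w ∈ orthHS n S, angleM n S (M j) w ∈ orthHS n S)
    (ρ : ℂ)
    (heig : ∀ w ∈ orthHS n S,
      ∑ j, f (angleM n S (M j) w) * (braceM n S (M j) w) ^ (-(k : ℤ)) = ρ * f w)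
    (hatt : ∃ w₀ ∈ orthHS n S, ∀ w ∈ orthHS n S,
      (quadR n S fun i => (w i).im) ^ ((k : ℝ) / 2) * ‖f w‖
        ≤ (quadR n S fun i => (w₀ i).im) ^ ((k : ℝ) / 2) * ‖f w₀‖)
    (hne : ∃ w ∈ orthHS n S, f w ≠ 0) :
    ‖ρ‖ ≤ (r : ℝ) ^ (-(k : ℝ) / 2) * ρ₀ := by
  obtain ⟨w₀, hw₀, hsup⟩ := hatt
  set Qκ := (quadR n S fun i => (w₀ i).im) ^ ((k : ℝ) / 2)
  have hpos : 0 < Qκ * ‖f w₀‖ := by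
    obtain ⟨w₁, hw₁, hf₁⟩ := hne
    exact (mul_pos (Real.rpow_pos_of_pos hw₁.1 _) (norm_pos_iff.2 hf₁)).trans_le (hsup w₁ hw₁)
  have hr' : (0 : ℝ) < r := by exact_mod_cast hr
  have hM j := transpose_mul_mul_eq_smul hr' (horth j)
  have hbound : ‖ρ‖ * (Qκ * ‖f w₀‖) ≤ (r : ℝ) ^ (-(k : ℝ) / 2) * ρ₀ * (Qκ * ‖f w₀‖) :=
    calc ‖ρ‖ * (Qκ * ‖f w₀‖)
        = Qκ * ‖∑ j, f (angleM n S (M j) w₀) * braceM n S (M j) w₀ ^ (-(k : ℤ))‖ := by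
          rw [heig w₀ hw₀, norm_mul]
          ring
      _ ≤ ∑ j, Qκ * ‖f (angleM n S (M j) w₀) * braceM n S (M j) w₀ ^ (-(k : ℤ))‖ := by
          rw [← Finset.mul_sum]
          exact mul_le_mul_of_nonneg_left (norm_sum_le _ _) (Real.rpow_pos_of_pos hw₀.1 _).le
      _ ≤ ∑ _j : Fin ρ₀, (r : ℝ) ^ (-(k : ℝ) / 2) * (Qκ * ‖f w₀‖) :=
          Finset.sum_le_sum fun j _ => rpow_mul_norm_slash_le hr' (hM j) (hplus j w₀ hw₀) hsup
      _ = _ := by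
          simp only [Finset.sum_const, Finset.card_univ, Fintype.card_fin, nsmul_eq_mul]
          ring
  exact le_of_mul_le_mul_right hbound hpos

/-- Lemma 6 (abstract form): if `f ≢ 0` is a weight-`k` cusp form whose Petersson-type
weight function `S₀[Im w]^{k/2}|f(w)|` is bounded on `H_S` with its supremum attained,
and `Σ_{j} f|_k M_j = ρ·f` for the `ρ₀` right-coset representatives `M_j ∈ Δ_S(r)`
(integral matrices with `r^{-1/2}M_j ∈ SO⁺(S₁;ℝ)`), then `|ρ| ≤ r^{-k/2}·ρ₀`. -/
theorem stmt_14 (n k : ℕ) (S : Matrix (Fin n) (Fin n) ℝ) (hsym : S.IsSymm)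
    (hpos : S.PosDef) (r ρ₀ : ℕ) (hr : 1 ≤ r)
    (f : (Idx n → ℂ) → ℂ) (hol : DifferentiableOn ℂ f (orthHS n S))
    (M : Fin ρ₀ → Matrix (Idx1 n) (Idx1 n) ℝ)
    (hint : ∀ j, ∃ A : Matrix (Idx1 n) (Idx1 n) ℤ, M j = A.map (Int.cast : ℤ → ℝ))
    (horth : ∀ j, ((Real.sqrt r)⁻¹ • M j)ᵀ * S1Mat n S * ((Real.sqrt r)⁻¹ • M j)
        = S1Mat n S)
    (hdet : ∀ j, ((Real.sqrt r)⁻¹ • M j).det = 1)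
    (hplus : ∀ j, ∀ w ∈ orthHS n S, angleM n S (M j) w ∈ orthHS n S)
    (ρ : ℂ)
    (heig : ∀ w ∈ orthHS n S,
      ∑ j, f (angleM n S (M j) w) * (braceM n S (M j) w) ^ (-(k : ℤ)) = ρ * f w)
    (hatt : ∃ w₀ ∈ orthHS n S, ∀ w ∈ orthHS n S,
      (quadR n S fun i => (w i).im) ^ ((k : ℝ) / 2) * ‖f w‖
        ≤ (quadR n S fun i => (w₀ i).im) ^ ((k : ℝ) / 2) * ‖f w₀‖)
    (hne : ∃ w ∈ orthHS n S, f w ≠ 0) :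
    ‖ρ‖ ≤ (r : ℝ) ^ (-(k : ℝ) / 2) * ρ₀ :=
  stmt_14_general n k S r ρ₀ hr f M horth hplus ρ heig hatt hne
end

section
/- For the orthogonal slash action: M{w} := -(γ/2)S₀[w] + dᵀw + δ for M = [[α, aᵀ, β],[b, K, c],[γ, dᵀ, δ]] ∈ O(S₁;ℝ) defines a cocycle: (MN){w} = M{N⟨w⟩} · N{w} for all M, N ∈ O⁺(S₁;ℝ) and w ∈ H_S, and consequently M⟨N⟨w⟩⟩ = (MN)⟨w⟩. -/
open Matrix Complex

namespace Stmt17Aux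

variable (n : ℕ) (S : Matrix (Fin n) (Fin n) ℝ)

/-- The lift `w ↦ (-S₀[w]/2, w, 1)`. -/
noncomputable def liftW (w : Idx n → ℂ) : Idx1 n → ℂ
  | Sum.inl _ => -(quadC n S w) / 2
  | Sum.inr (Sum.inl i) => w i
  | Sum.inr (Sum.inr _) => 1

/-- `S₁[u]` over `ℂ`. -/
noncomputable def quadC1 (u : Idx1 n → ℂ) : ℂ :=
  u ⬝ᵥ ((S1Mat n S).map Complex.ofReal).mulVec u

lemma quadC1_decomp (u : Idx1 n → ℂ) :
    quadC1 n S u = 2 * u (Sum.inl 0) * u (Sum.inr (Sum.inr 0))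
      + quadC n S (fun i => u (Sum.inr (Sum.inl i))) := by
  simp [quadC1, quadC, dotProduct, mulVec, S1Mat, Fintype.sum_sum_type,
    Fin.sum_univ_one]
  ring

lemma map_mul_ofReal (A B : Matrix (Idx1 n) (Idx1 n) ℝ) :
    (A * B).map Complex.ofReal = A.map Complex.ofReal * B.map Complex.ofReal := by
  ext i j
  simp [Matrix.mul_apply, Matrix.map_apply]

lemma quadC1_mulVec (M : Matrix (Idx1 n) (Idx1 n) ℝ)
    (hM : Mᵀ * S1Mat n S * M = S1Mat n S) (u : Idx1 n → ℂ) :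
    quadC1 n S ((M.map Complex.ofReal).mulVec u) = quadC1 n S u := by
  have hmap : (M.map Complex.ofReal)ᵀ * (S1Mat n S).map Complex.ofReal
      * (M.map Complex.ofReal) = (S1Mat n S).map Complex.ofReal := by
    rw [← Matrix.transpose_map, ← map_mul_ofReal, ← map_mul_ofReal, hM]
  set A := M.map Complex.ofReal
  calc quadC1 n S (A.mulVec u)
      = A.mulVec u ⬝ᵥ ((S1Mat n S).map Complex.ofReal * A).mulVec u := by
        rw [quadC1, Matrix.mulVec_mulVec]
    _ = Matrix.vecMul (Matrix.vecMul u Aᵀ) ((S1Mat n S).map Complex.ofReal * A) ⬝ᵥ u := by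
        rw [Matrix.dotProduct_mulVec, Matrix.vecMul_transpose]
    _ = u ⬝ᵥ (Aᵀ * ((S1Mat n S).map Complex.ofReal * A)).mulVec u := by
        rw [Matrix.dotProduct_mulVec, Matrix.vecMul_vecMul]
    _ = quadC1 n S u := by rw [← Matrix.mul_assoc, hmap, quadC1]

lemma quadC_smul (c : ℂ) (v : Idx n → ℂ) :
    quadC n S (c • v) = c * c * quadC n S v := by
  simp [quadC, Matrix.mulVec_smul, smul_smul]
  ring

lemma mulVec_lift_last (M : Matrix (Idx1 n) (Idx1 n) ℝ) (w : Idx n → ℂ) (x : Fin 1) :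
    ((M.map Complex.ofReal).mulVec (liftW n S w)) (Sum.inr (Sum.inr x))
      = braceM n S M w := by
  have : x = 0 := Subsingleton.elim _ _
  subst this
  simp [mulVec, liftW, braceM, dotProduct, Fintype.sum_sum_type, Fin.sum_univ_one,
    Matrix.map_apply]
  ring

lemma mulVec_lift_mid (M : Matrix (Idx1 n) (Idx1 n) ℝ) (w : Idx n → ℂ) (i : Idx n) :
    ((M.map Complex.ofReal).mulVec (liftW n S w)) (Sum.inr (Sum.inl i))
      = -(1 / 2) * quadC n S w * (M (Sum.inr (Sum.inl i)) (Sum.inl 0) : ℂ)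
        + (fun j => (M (Sum.inr (Sum.inl i)) (Sum.inr (Sum.inl j)) : ℂ)) ⬝ᵥ w
        + (M (Sum.inr (Sum.inl i)) (Sum.inr (Sum.inr 0)) : ℂ) := by
  simp [mulVec, liftW, dotProduct, Fintype.sum_sum_type, Fin.sum_univ_one,
    Matrix.map_apply]
  ring

lemma brace_ne (M : Matrix (Idx1 n) (Idx1 n) ℝ) (w : Idx n → ℂ)
    (h : angleM n S M w ∈ orthHS n S) : braceM n S M w ≠ 0 := by
  intro h0
  have hz : angleM n S M w = fun _ => 0 := by
    funext i; simp [angleM, h0]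
  rw [hz] at h
  simp [orthHS, quadR, dotProduct] at h

lemma mid_eq_smul (M : Matrix (Idx1 n) (Idx1 n) ℝ) (w : Idx n → ℂ)
    (hb : braceM n S M w ≠ 0) (i : Idx n) :
    ((M.map Complex.ofReal).mulVec (liftW n S w)) (Sum.inr (Sum.inl i))
      = braceM n S M w * angleM n S M w i := by
  rw [mulVec_lift_mid, angleM]
  field_simp

lemma mulVec_lift (M : Matrix (Idx1 n) (Idx1 n) ℝ)
    (hM : Mᵀ * S1Mat n S * M = S1Mat n S) (w : Idx n → ℂ)
    (hb : braceM n S M w ≠ 0) :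
    (M.map Complex.ofReal).mulVec (liftW n S w)
      = braceM n S M w • liftW n S (angleM n S M w) := by
  have hlift0 : quadC1 n S (liftW n S w) = 0 := by
    rw [quadC1_decomp]
    have : (fun i => liftW n S w (Sum.inr (Sum.inl i))) = w := rfl
    rw [this]
    simp [liftW]
    ring
  have hq : quadC1 n S ((M.map Complex.ofReal).mulVec (liftW n S w)) = 0 := by
    rw [quadC1_mulVec n S M hM, hlift0]
  rw [quadC1_decomp] at hq
  have hmid : (fun i => ((M.map Complex.ofReal).mulVec (liftW n S w)) (Sum.inr (Sum.inl i)))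
      = braceM n S M w • angleM n S M w := by
    funext i
    rw [mid_eq_smul n S M w hb i]
    simp
  rw [hmid, quadC_smul, mulVec_lift_last] at hq
  funext j
  match j with
  | Sum.inr (Sum.inl i) =>
      rw [mid_eq_smul n S M w hb i]
      simp [liftW]
  | Sum.inr (Sum.inr x) =>
      rw [mulVec_lift_last]
      simp [liftW]
  | Sum.inl x =>
      have hx : x = 0 := Subsingleton.elim _ _
      subst hx
      have h2b : (2 : ℂ) * braceM n S M w ≠ 0 := by
        exact mul_ne_zero two_ne_zero hb
      simp only [Pi.smul_apply, liftW, smul_eq_mul]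
      apply mul_left_cancel₀ h2b
      linear_combination hq

end Stmt17Aux

open Stmt17Aux in
/-- Cocycle relation: for `M, N ∈ O⁺(S₁;ℝ)` and `w ∈ H_S`,
`(MN){w} = M{N⟨w⟩}·N{w}` and `(MN)⟨w⟩ = M⟨N⟨w⟩⟩`. -/
theorem stmt_17 (n : ℕ) (S : Matrix (Fin n) (Fin n) ℝ) (hsym : S.IsSymm)
    (hpos : S.PosDef)
    (M N : Matrix (Idx1 n) (Idx1 n) ℝ)
    (hM : Mᵀ * S1Mat n S * M = S1Mat n S)
    (hN : Nᵀ * S1Mat n S * N = S1Mat n S)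
    (hMplus : ∀ w ∈ orthHS n S, angleM n S M w ∈ orthHS n S)
    (hNplus : ∀ w ∈ orthHS n S, angleM n S N w ∈ orthHS n S) :
    ∀ w ∈ orthHS n S,
      braceM n S (M * N) w = braceM n S M (angleM n S N w) * braceM n S N w ∧
      angleM n S (M * N) w = angleM n S M (angleM n S N w) := by
  intro w hw
  have hw' : angleM n S N w ∈ orthHS n S := hNplus w hw
  have hbN : braceM n S N w ≠ 0 := brace_ne n S N w hw'
  have hbM : braceM n S M (angleM n S N w) ≠ 0 :=
    brace_ne n S M _ (hMplus _ hw')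
  have E : ((M * N).map Complex.ofReal).mulVec (liftW n S w)
      = braceM n S N w • (braceM n S M (angleM n S N w) •
          liftW n S (angleM n S M (angleM n S N w))) := by
    rw [map_mul_ofReal, ← Matrix.mulVec_mulVec, mulVec_lift n S N hN w hbN,
      Matrix.mulVec_smul, mulVec_lift n S M hM _ hbM]
  have hlast : braceM n S (M * N) w
      = braceM n S M (angleM n S N w) * braceM n S N w := by
    have h := congrFun E (Sum.inr (Sum.inr 0))
    rw [mulVec_lift_last] at h
    simp only [Pi.smul_apply, smul_eq_mul, liftW] at h
    rw [h]; ring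
  refine ⟨hlast, ?_⟩
  funext i
  have h := congrFun E (Sum.inr (Sum.inl i))
  rw [mulVec_lift_mid] at h
  simp only [Pi.smul_apply, smul_eq_mul, liftW] at h
  rw [angleM, h, hlast]
  field_simp
end
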